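/- arXiv:2107.14141 — 7 statements merged into one kernel-verified Lean document; each statement's English description precedes it below -/
import Mathlib

section
/- Let (X,T) be an algebraic E-test space and let f, g ∈ 𝓔(X,T). Then π(f) ≤ π(g) if and only if there exists h ∈ 𝓔(X,T) such that π(h) = π(g) and f ≤ h pointwise. -/
/-- The set of events of a test space: functions dominated by some test. -/
def Events {X : Type*} (T : Set (X → ℕ)) : Set (X → ℕ) := {f | ∃ t ∈ T, f ≤ t}

/-- `(X, T)` is an E-test space. -/
def IsETestSpace {X : Type*} (T : Set (X → ℕ)) : Prop :=
  (∀ x : X, ∃ t ∈ T, t x ≠ 0) ∧ ∀ s ∈ T, ∀ t ∈ T, s ≤ t → s = t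

/-- `f ⊥ g`: the sum is again an event. -/
def Perp {X : Type*} (T : Set (X → ℕ)) (f g : X → ℕ) : Prop := f + g ∈ Events T

/-- `f ≈ g`: there is an event `h` with `f + h ∈ T` and `g + h ∈ T`. -/
def Approx {X : Type*} (T : Set (X → ℕ)) (f g : X → ℕ) : Prop :=
  ∃ h ∈ Events T, f + h ∈ T ∧ g + h ∈ T

/-- `(X, T)` is algebraic. -/
def IsAlgebraicTS {X : Type*} (T : Set (X → ℕ)) : Prop :=
  ∀ f ∈ Events T, ∀ g ∈ Events T, ∀ h ∈ Events T,
    f + h ∈ T → g + h ∈ T → Perp T h f → Perp T h g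

/-- `π f`: the `≈`-class of the event `f`, as a set of functions. -/
def piE {X : Type*} (T : Set (X → ℕ)) (f : X → ℕ) : Set (X → ℕ) :=
  {g | g ∈ Events T ∧ Approx T g f}

/-- `π f ≤ π g`: there is an event `i` with `f ⊥ i` and `π (f + i) = π g`. -/
def piLe {X : Type*} (T : Set (X → ℕ)) (f g : X → ℕ) : Prop :=
  ∃ i ∈ Events T, Perp T f i ∧ piE T (f + i) = piE T g

theorem piLe_iff_exists_rep {X : Type*} (T : Set (X → ℕ)) (hT : IsETestSpace T)
    (hAlg : IsAlgebraicTS T) (f g : X → ℕ) (hf : f ∈ Events T) (hg : g ∈ Events T) :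
    piLe T f g ↔ ∃ h ∈ Events T, piE T h = piE T g ∧ f ≤ h := by
  constructor
  · rintro ⟨i, hi, hperp, hpi⟩
    exact ⟨f + i, hperp, hpi, fun x => Nat.le_add_right _ _⟩
  · rintro ⟨h, hh, hpi, hfh⟩
    refine ⟨h - f, ?_, ?_, ?_⟩
    · obtain ⟨t, ht, hht⟩ := hh
      exact ⟨t, ht, fun x => le_trans (Nat.sub_le _ _) (hht x)⟩
    · have : f + (h - f) = h := by
        funext x
        exact Nat.add_sub_cancel' (hfh x)
      rw [Perp, this]; exact hh
    · have : f + (h - f) = h := by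
        funext x
        exact Nat.add_sub_cancel' (hfh x)
      rw [this]; exact hpi
end

section
/- Let (X,T) be an algebraic E-test space and let f, g ∈ 𝓔(X,T). If h ∈ 𝓔(X,T) satisfies π(f) ≤ π(h) and π(g) ≤ π(h), then there exists a quadruple q = (f₁,f₂,f₃,f₄) ∈ ub(f,g) such that h_q ≤ h pointwise, where h_q x = max(f x + f₂ x − f₁ x, g x + f₄ x − f₃ x, 0) (maximum in ℤ). -/
/-- Quadruples of functions. -/
abbrev Quad (X : Type*) := (X → ℕ) × (X → ℕ) × (X → ℕ) × (X → ℕ)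

/-- The set `ub(f,g)` of quadruples `(f₁,f₂,f₃,f₄) ∈ T⁴` with
`f ≤ f₁`, `g ≤ f₃`, `f + f₂ ≤ f₁ + f₄`, `g + f₄ ≤ f₃ + f₂`. -/
def ubSet {X : Type*} (T : Set (X → ℕ)) (f g : X → ℕ) : Set (Quad X) :=
  {q | q.1 ∈ T ∧ q.2.1 ∈ T ∧ q.2.2.1 ∈ T ∧ q.2.2.2 ∈ T ∧
    f ≤ q.1 ∧ g ≤ q.2.2.1 ∧ f + q.2.1 ≤ q.1 + q.2.2.2 ∧ g + q.2.2.2 ≤ q.2.2.1 + q.2.1}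

/-- `h_q x = max (f x + f₂ x - f₁ x) (g x + f₄ x - f₃ x) 0`, the maximum taken in `ℤ`. -/
def hQ {X : Type*} (f g : X → ℕ) (q : Quad X) : X → ℕ := fun x =>
  (max (max ((f x : ℤ) + q.2.1 x - q.1 x) ((g x : ℤ) + q.2.2.2 x - q.2.2.1 x)) 0).toNat

/-- `f, g` satisfy the J-condition for `q`. -/
def JCond {X : Type*} (T : Set (X → ℕ)) (f g : X → ℕ) (q : Quad X) : Prop :=
  q ∈ ubSet T f g ∧ ∀ q' ∈ ubSet T f g, piLe T (hQ f g q) (hQ f g q')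

theorem exists_ub_quad_le {X : Type*} (T : Set (X → ℕ)) (hT : IsETestSpace T)
    (hAlg : IsAlgebraicTS T) (f g : X → ℕ) (hf : f ∈ Events T) (hg : g ∈ Events T)
    (h : X → ℕ) (hh : h ∈ Events T) (hfh : piLe T f h) (hgh : piLe T g h) :
    ∃ q ∈ ubSet T f g, hQ f g q ≤ h := by
  obtain ⟨i, hiE, hfi, hpif⟩ := hfh
  obtain ⟨j, hjE, hgj, hpig⟩ := hgh
  obtain ⟨t, htT, hht⟩ := hh
  have hteq : h + (fun x => t x - h x) = t := funext fun x => by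
    simp only [Pi.add_apply]; exact Nat.add_sub_cancel' (hht x)
  have hhself : h ∈ piE T h :=
    ⟨⟨t, htT, hht⟩, fun x => t x - h x, ⟨t, htT, fun x => Nat.sub_le _ _⟩,
      by rw [hteq]; exact htT, by rw [hteq]; exact htT⟩
  have h1 : h ∈ piE T (f + i) := hpif ▸ hhself
  have h2 : h ∈ piE T (g + j) := hpig ▸ hhself
  obtain ⟨-, k, hkE, hhk, hfik⟩ := h1
  obtain ⟨-, m, hmE, hhm, hgjm⟩ := h2
  refine ⟨(f + i + k, h + k, g + j + m, h + m),
    ⟨hfik, hhk, hgjm, hhm, ?_, ?_, ?_, ?_⟩, ?_⟩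
  · intro x; simp only [Pi.add_apply]; omega
  · intro x; simp only [Pi.add_apply]; omega
  · intro x; simp only [Pi.add_apply]; omega
  · intro x; simp only [Pi.add_apply]; omega
  · intro x
    simp only [hQ, Pi.add_apply]
    push_cast
    omega
end

section
/- Let (X,T) be an algebraic E-test space and let f, g ∈ 𝓔(X,T). If h ∈ 𝓔(X,T) satisfies π(h) ≤ π(f) and π(h) ≤ π(g), then there exists a quadruple q = (f₁,f₂,f₃,f₄) ∈ lb(f,g) such that h ≤ i_q pointwise, where i_q x = min(f x + f₁ x − f₂ x, g x + f₃ x − f₄ x). -/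
/-- The set `lb(f,g)` of quadruples `(f₁,f₂,f₃,f₄) ∈ T⁴` with
`f ≤ f₂`, `g ≤ f₄`, `f₂ ≤ f + f₁`, `f₄ ≤ g + f₃`. -/
def lbSet {X : Type*} (T : Set (X → ℕ)) (f g : X → ℕ) : Set (Quad X) :=
  {q | q.1 ∈ T ∧ q.2.1 ∈ T ∧ q.2.2.1 ∈ T ∧ q.2.2.2 ∈ T ∧
    f ≤ q.2.1 ∧ g ≤ q.2.2.2 ∧ q.2.1 ≤ f + q.1 ∧ q.2.2.2 ≤ g + q.2.2.1}

/-- `i_q x = min (f x + f₁ x - f₂ x) (g x + f₃ x - f₄ x)` (both arguments nonnegative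
when `q ∈ lb(f,g)`, so natural subtraction agrees with integer subtraction). -/
def iQ {X : Type*} (f g : X → ℕ) (q : Quad X) : X → ℕ := fun x =>
  min (f x + q.1 x - q.2.1 x) (g x + q.2.2.1 x - q.2.2.2 x)

/-- `f, g` satisfy the M-condition for `q`. -/
def MCond {X : Type*} (T : Set (X → ℕ)) (f g : X → ℕ) (q : Quad X) : Prop :=
  q ∈ lbSet T f g ∧ ∀ q' ∈ lbSet T f g, piLe T (iQ f g q') (iQ f g q)


private lemma piLe_extract {X : Type*} (T : Set (X → ℕ)) (h f : X → ℕ)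
    (hhf : piLe T h f) : ∃ k d : X → ℕ, h + k + d ∈ T ∧ f + d ∈ T := by
  obtain ⟨i, hi, hperp, hpi⟩ := hhf
  have hmem : (h + i) ∈ piE T f := by
    rw [← hpi]
    obtain ⟨t, ht, hle⟩ := hperp
    refine ⟨⟨t, ht, hle⟩, fun x => t x - (h + i) x, ⟨t, ht, fun x => Nat.sub_le _ _⟩, ?_, ?_⟩ <;>
    · have : (h + i) + (fun x => t x - (h + i) x) = t := by
        funext x; exact Nat.add_sub_cancel' (hle x)
      rw [this]; exact ht
  obtain ⟨_, d, hd, h1, h2⟩ := hmem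
  exact ⟨i, d, h1, h2⟩

theorem exists_lb_quad_ge {X : Type*} (T : Set (X → ℕ)) (hT : IsETestSpace T)
    (hAlg : IsAlgebraicTS T) (f g : X → ℕ) (hf : f ∈ Events T) (hg : g ∈ Events T)
    (h : X → ℕ) (hh : h ∈ Events T) (hhf : piLe T h f) (hhg : piLe T h g) :
    ∃ q ∈ lbSet T f g, h ≤ iQ f g q := by
  obtain ⟨i, d, hid, hfd⟩ := piLe_extract T h f hhf
  obtain ⟨j, e, hje, hge⟩ := piLe_extract T h g hhg
  refine ⟨(h + i + d, f + d, h + j + e, g + e), ⟨hid, hfd, hje, hge,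
    fun x => Nat.le_add_right _ _, fun x => Nat.le_add_right _ _,
    fun x => by simp [Pi.add_apply], fun x => by simp [Pi.add_apply]⟩,
    fun x => ?_⟩
  simp only [iQ, Pi.add_apply, le_min_iff]
  omega
end

section
/- In the example, for every h ∈ 𝓔(X,T): π(δ_a) ≤ π(h) and π(δ_c) ≤ π(h) hold if and only if π(h) ∈ {π(t₂), π(δ_a + δ_c), π(2·δ_c)}; that is, the set of upper bounds of π(δ_a) and π(δ_c) in Π(X) = {π(f) | f ∈ 𝓔(X,T)} is exactly {π(t₂), π(δ_a + δ_c), π(2·δ_c)}. -/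
theorem example_upper_bounds {X : Type*} [DecidableEq X] (a b c : X)
    (hab : a ≠ b) (hac : a ≠ c) (hbc : b ≠ c)
    (hcover : ∀ x : X, x = a ∨ x = b ∨ x = c)
    (t₁ t₂ : X → ℕ)
    (h1a : t₁ a = 2) (h1b : t₁ b = 2) (h1c : t₁ c = 0)
    (h2a : t₂ a = 1) (h2b : t₂ b = 0) (h2c : t₂ c = 2)
    (T : Set (X → ℕ)) (hTdef : T = {t₁, t₂})
    (δ : X → X → ℕ) (hδ : ∀ x y, δ x y = if y = x then 1 else 0) :
    ∀ h ∈ Events T,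
      (piLe T (δ a) h ∧ piLe T (δ c) h) ↔
        (piE T h = piE T t₂ ∨ piE T h = piE T (δ a + δ c) ∨ piE T h = piE T (2 • δ c)) := by
  -- δ value lemmas
  have da_a : δ a a = 1 := by rw [hδ]; simp
  have da_b : δ a b = 0 := by rw [hδ]; simp [hab.symm]
  have da_c : δ a c = 0 := by rw [hδ]; simp [hac.symm]
  have db_a : δ b a = 0 := by rw [hδ]; simp [hab]
  have db_b : δ b b = 1 := by rw [hδ]; simp
  have db_c : δ b c = 0 := by rw [hδ]; simp [hbc.symm]
  have dc_a : δ c a = 0 := by rw [hδ]; simp [hac]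
  have dc_b : δ c b = 0 := by rw [hδ]; simp [hbc]
  have dc_c : δ c c = 1 := by rw [hδ]; simp
  set u : X → ℕ := δ a + (δ b + δ b) with hu
  set v : X → ℕ := 2 • δ c with hv
  have ua : u a = 1 := by simp [hu, Pi.add_apply, da_a, db_a]
  have ub : u b = 2 := by simp [hu, Pi.add_apply, da_b, db_b]
  have uc : u c = 0 := by simp [hu, Pi.add_apply, da_c, db_c]
  have va : v a = 0 := by simp [hv, Pi.smul_apply, dc_a]
  have vb : v b = 0 := by simp [hv, Pi.smul_apply, dc_b]
  have vc : v c = 2 := by simp [hv, Pi.smul_apply, dc_c]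
  have eqv : ∀ f g : X → ℕ, f a = g a → f b = g b → f c = g c → f = g := by
    intro f g h₁ h₂ h₃; funext x
    rcases hcover x with rfl | rfl | rfl <;> assumption
  have memT : ∀ f : X → ℕ, f ∈ T ↔ f = t₁ ∨ f = t₂ := by
    intro f; rw [hTdef]; simp [Set.mem_insert_iff]
  have t₁T : t₁ ∈ T := (memT t₁).2 (Or.inl rfl)
  have t₂T : t₂ ∈ T := (memT t₂).2 (Or.inr rfl)
  have le_iff : ∀ f g : X → ℕ, f ≤ g ↔ (f a ≤ g a ∧ f b ≤ g b ∧ f c ≤ g c) := by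
    intro f g
    constructor
    · intro h; exact ⟨h a, h b, h c⟩
    · rintro ⟨h₁, h₂, h₃⟩ x; rcases hcover x with rfl | rfl | rfl <;> assumption
  have memE : ∀ f : X → ℕ, f ∈ Events T ↔ (f ≤ t₁ ∨ f ≤ t₂) := by
    intro f
    constructor
    · rintro ⟨t, ht, hle⟩
      rcases (memT t).1 ht with rfl | rfl
      · exact Or.inl hle
      · exact Or.inr hle
    · rintro (h | h)
      · exact ⟨t₁, t₁T, h⟩
      · exact ⟨t₂, t₂T, h⟩
  -- events
  have hEt₂ : t₂ ∈ Events T := ⟨t₂, t₂T, le_refl _⟩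
  have hEu : u ∈ Events T := (memE u).2 (Or.inl ((le_iff _ _).2 (by
    rw [ua, ub, uc, h1a, h1b, h1c]; omega)))
  have hEv : v ∈ Events T := (memE v).2 (Or.inr ((le_iff _ _).2 (by
    rw [va, vb, vc, h2a, h2b, h2c]; omega)))
  have hEda : δ a ∈ Events T := (memE _).2 (Or.inr ((le_iff _ _).2 (by
    rw [da_a, da_b, da_c, h2a, h2b, h2c]; omega)))
  have hEac : δ a + δ c ∈ Events T := (memE _).2 (Or.inr ((le_iff _ _).2 (by
    simp only [Pi.add_apply]; rw [da_a, da_b, da_c, dc_a, dc_b, dc_c, h2a, h2b, h2c]; omega)))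
  have hEcc : δ c + δ c ∈ Events T := (memE _).2 (Or.inr ((le_iff _ _).2 (by
    simp only [Pi.add_apply]; rw [dc_a, dc_b, dc_c, h2a, h2b, h2c]; omega)))
  have hEbb : δ b + δ b ∈ Events T := (memE _).2 (Or.inl ((le_iff _ _).2 (by
    simp only [Pi.add_apply]; rw [db_a, db_b, db_c, h1a, h1b, h1c]; omega)))
  have hEdc : δ c ∈ Events T := (memE _).2 (Or.inr ((le_iff _ _).2 (by
    rw [dc_a, dc_b, dc_c, h2a, h2b, h2c]; omega)))
  -- reflexivity of Approx on events
  have arefl : ∀ f, f ∈ Events T → Approx T f f := by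
    rintro f ⟨t, ht, hle⟩
    refine ⟨fun x => t x - f x, ⟨t, ht, fun x => Nat.sub_le _ _⟩, ?_, ?_⟩ <;>
    · have : f + (fun x => t x - f x) = t := by
        funext x
        have hx : f x ≤ t x := hle x
        show f x + (t x - f x) = t x
        omega
      rw [this]; exact ht
  -- the key classification of Approx
  have key : ∀ g f : X → ℕ, Approx T g f →
      (g = f ∨ (g = t₁ ∧ f = t₂) ∨ (g = t₂ ∧ f = t₁) ∨ (g = u ∧ f = v) ∨ (g = v ∧ f = u)) := by
    rintro g f ⟨w, hwE, hgw, hfw⟩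
    have cancel : ∀ p q : X → ℕ, p + w = q + w → p = q := by
      intro p q he
      funext x
      have := congrFun he x
      simp only [Pi.add_apply] at this
      omega
    rcases (memT _).1 hgw with hg1 | hg2 <;> rcases (memT _).1 hfw with hf1 | hf2
    · exact Or.inl (cancel g f (hg1.trans hf1.symm))
    · -- g + w = t₁, f + w = t₂
      have e1 := congrFun hg1 a; have e2 := congrFun hg1 b; have e3 := congrFun hg1 c
      have e4 := congrFun hf2 a; have e5 := congrFun hf2 b; have e6 := congrFun hf2 c
      simp only [Pi.add_apply] at e1 e2 e3 e4 e5 e6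
      rw [h1a] at e1; rw [h1b] at e2; rw [h1c] at e3
      rw [h2a] at e4; rw [h2b] at e5; rw [h2c] at e6
      rcases (by omega : w a = 0 ∨ w a = 1) with hwa | hwa
      · refine Or.inr (Or.inl ⟨eqv g t₁ ?_ ?_ ?_, eqv f t₂ ?_ ?_ ?_⟩) <;>
          first
            | (rw [h1a]; omega) | (rw [h1b]; omega) | (rw [h1c]; omega)
            | (rw [h2a]; omega) | (rw [h2b]; omega) | (rw [h2c]; omega)
      · refine Or.inr (Or.inr (Or.inr (Or.inl ⟨eqv g u ?_ ?_ ?_, eqv f v ?_ ?_ ?_⟩))) <;>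
          first
            | (rw [ua]; omega) | (rw [ub]; omega) | (rw [uc]; omega)
            | (rw [va]; omega) | (rw [vb]; omega) | (rw [vc]; omega)
    · -- g + w = t₂, f + w = t₁
      have e1 := congrFun hg2 a; have e2 := congrFun hg2 b; have e3 := congrFun hg2 c
      have e4 := congrFun hf1 a; have e5 := congrFun hf1 b; have e6 := congrFun hf1 c
      simp only [Pi.add_apply] at e1 e2 e3 e4 e5 e6
      rw [h2a] at e1; rw [h2b] at e2; rw [h2c] at e3
      rw [h1a] at e4; rw [h1b] at e5; rw [h1c] at e6
      rcases (by omega : w a = 0 ∨ w a = 1) with hwa | hwa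
      · refine Or.inr (Or.inr (Or.inl ⟨eqv g t₂ ?_ ?_ ?_, eqv f t₁ ?_ ?_ ?_⟩)) <;>
          first
            | (rw [h1a]; omega) | (rw [h1b]; omega) | (rw [h1c]; omega)
            | (rw [h2a]; omega) | (rw [h2b]; omega) | (rw [h2c]; omega)
      · refine Or.inr (Or.inr (Or.inr (Or.inr ⟨eqv g v ?_ ?_ ?_, eqv f u ?_ ?_ ?_⟩))) <;>
          first
            | (rw [ua]; omega) | (rw [ub]; omega) | (rw [uc]; omega)
            | (rw [va]; omega) | (rw [vb]; omega) | (rw [vc]; omega)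
    · exact Or.inl (cancel g f (hg2.trans hf2.symm))
  -- u ≈ v
  have uda : u + δ a = t₁ := by
    refine eqv _ _ ?_ ?_ ?_ <;> simp only [Pi.add_apply]
    · rw [ua, da_a, h1a]
    · rw [ub, da_b, h1b]
    · rw [uc, da_c, h1c]
  have vda : v + δ a = t₂ := by
    refine eqv _ _ ?_ ?_ ?_ <;> simp only [Pi.add_apply]
    · rw [va, da_a, h2a]
    · rw [vb, da_b, h2b]
    · rw [vc, da_c, h2c]
  have auv : Approx T u v := ⟨δ a, hEda, by rw [uda]; exact t₁T, by rw [vda]; exact t₂T⟩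
  have avu : Approx T v u := ⟨δ a, hEda, by rw [vda]; exact t₂T, by rw [uda]; exact t₁T⟩
  -- π u = π v
  have puv : piE T u = piE T v := by
    ext g
    simp only [piE, Set.mem_setOf_eq]
    constructor
    · rintro ⟨hg, hap⟩
      refine ⟨hg, ?_⟩
      rcases key g u hap with rfl | ⟨rfl, hcc⟩ | ⟨rfl, hcc⟩ | ⟨rfl, hcc⟩ | ⟨rfl, hcc⟩
      · exact auv
      · exfalso; have := congrFun hcc c; rw [uc, h2c] at this; omega
      · exfalso; have := congrFun hcc a; rw [ua, h1a] at this; omega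
      · exact auv
      · exact arefl v hEv
    · rintro ⟨hg, hap⟩
      refine ⟨hg, ?_⟩
      rcases key g v hap with rfl | ⟨rfl, hcc⟩ | ⟨rfl, hcc⟩ | ⟨rfl, hcc⟩ | ⟨rfl, hcc⟩
      · exact avu
      · exfalso; have := congrFun hcc a; rw [va, h2a] at this; omega
      · exfalso; have := congrFun hcc c; rw [vc, h1c] at this; omega
      · exact arefl u hEu
      · exact avu
    -- value lemmas for δ a + δ c
  have ac_a : (δ a + δ c) a = 1 := by show δ a a + δ c a = 1; rw [da_a, dc_a]
  have ac_b : (δ a + δ c) b = 0 := by show δ a b + δ c b = 0; rw [da_b, dc_b]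
  have ac_c : (δ a + δ c) c = 1 := by show δ a c + δ c c = 1; rw [da_c, dc_c]
  intro f hf
  constructor
  · rintro ⟨⟨i, hiE, hiP, hie⟩, ⟨j, hjE, hjP, hje⟩⟩
    have hg2self : (δ c + j) ∈ piE T (δ c + j) := ⟨hjP, arefl _ hjP⟩
    have hmem : (δ c + j) ∈ piE T (δ a + i) := by rw [hie, ← hje]; exact hg2self
    have hap : Approx T (δ c + j) (δ a + i) := hmem.2
    have hg2c : 1 ≤ (δ c + j) c := by show 1 ≤ δ c c + j c; rw [dc_c]; omega
    have hg1a : 1 ≤ (δ a + i) a := by show 1 ≤ δ a a + i a; rw [da_a]; omega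
    rcases key _ _ hap with heq | ⟨h1', h2'⟩ | ⟨h1', h2'⟩ | ⟨h1', h2'⟩ | ⟨h1', h2'⟩
    · have hg2a : 1 ≤ (δ c + j) a := by rw [heq]; exact hg1a
      rcases (memE _).1 hjP with hle | hle
      · exfalso
        have h3 := ((le_iff _ _).1 hle).2.2
        rw [h1c] at h3; omega
      · obtain ⟨l1, l2, l3⟩ := (le_iff _ _).1 hle
        rw [h2a] at l1; rw [h2b] at l2; rw [h2c] at l3
        rcases (by omega : (δ c + j) c = 1 ∨ (δ c + j) c = 2) with hcc | hcc
        · right; left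
          have hsum : δ c + j = δ a + δ c :=
            eqv _ _ (by rw [ac_a]; omega) (by rw [ac_b]; omega) (by rw [ac_c]; omega)
          rw [← hje, hsum]
        · left
          have hsum : δ c + j = t₂ :=
            eqv _ _ (by rw [h2a]; omega) (by rw [h2b]; omega) (by rw [h2c]; omega)
          rw [← hje, hsum]
    · exfalso; have := congrFun h1' c; rw [h1c] at this; omega
    · left; rw [← hje, h1']
    · exfalso; have := congrFun h1' c; rw [uc] at this; omega
    · right; right; rw [← hje, h1']
  · have sum1 : δ a + (δ c + δ c) = t₂ := by
      refine eqv _ _ ?_ ?_ ?_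
      · show δ a a + (δ c a + δ c a) = t₂ a; rw [da_a, dc_a, h2a]
      · show δ a b + (δ c b + δ c b) = t₂ b; rw [da_b, dc_b, h2b]
      · show δ a c + (δ c c + δ c c) = t₂ c; rw [da_c, dc_c, h2c]
    have sum2 : δ c + (δ a + δ c) = t₂ := by
      refine eqv _ _ ?_ ?_ ?_
      · show δ c a + (δ a a + δ c a) = t₂ a; rw [da_a, dc_a, h2a]
      · show δ c b + (δ a b + δ c b) = t₂ b; rw [da_b, dc_b, h2b]
      · show δ c c + (δ a c + δ c c) = t₂ c; rw [da_c, dc_c, h2c]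
    rintro (hEq | hEq | hEq)
    · constructor
      · refine ⟨δ c + δ c, hEcc, ?_, ?_⟩
        · show δ a + (δ c + δ c) ∈ Events T; rw [sum1]; exact hEt₂
        · rw [sum1]; exact hEq.symm
      · refine ⟨δ a + δ c, hEac, ?_, ?_⟩
        · show δ c + (δ a + δ c) ∈ Events T; rw [sum2]; exact hEt₂
        · rw [sum2]; exact hEq.symm
    · constructor
      · exact ⟨δ c, hEdc, hEac, hEq.symm⟩
      · refine ⟨δ a, hEda, ?_, ?_⟩
        · show δ c + δ a ∈ Events T; rw [add_comm (δ c) (δ a)]; exact hEac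
        · rw [add_comm (δ c) (δ a)]; exact hEq.symm
    · constructor
      · refine ⟨δ b + δ b, hEbb, ?_, ?_⟩
        · exact hEu
        · exact puv.trans hEq.symm
      · refine ⟨δ c, hEdc, hEcc, ?_⟩
        have h2s : v = δ c + δ c := by rw [hv]; exact two_smul ℕ (δ c)
        rw [← h2s]; exact hEq.symm
end

section
/- In the example, the pair π(δ_a), π(δ_c) has no least upper bound: there is no h ∈ 𝓔(X,T) such that π(δ_a) ≤ π(h), π(δ_c) ≤ π(h), and π(h) ≤ π(k) for every k ∈ 𝓔(X,T) with π(δ_a) ≤ π(k) and π(δ_c) ≤ π(k). In particular, the poset Π(X) = {π(f) | f ∈ 𝓔(X,T)} ordered by ≤ is not a lattice. -/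
theorem example_no_join {X : Type*} [DecidableEq X] (a b c : X)
    (hab : a ≠ b) (hac : a ≠ c) (hbc : b ≠ c)
    (hcover : ∀ x : X, x = a ∨ x = b ∨ x = c)
    (t₁ t₂ : X → ℕ)
    (h1a : t₁ a = 2) (h1b : t₁ b = 2) (h1c : t₁ c = 0)
    (h2a : t₂ a = 1) (h2b : t₂ b = 0) (h2c : t₂ c = 2)
    (T : Set (X → ℕ)) (hTdef : T = {t₁, t₂})
    (δ : X → X → ℕ) (hδ : ∀ x y, δ x y = if y = x then 1 else 0) :
    ¬ ∃ h ∈ Events T, piLe T (δ a) h ∧ piLe T (δ c) h ∧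
        ∀ k ∈ Events T, piLe T (δ a) k → piLe T (δ c) k → piLe T h k := by
  rintro ⟨h, hhEv, hA, hC, hlub⟩
  obtain ⟨ia, hiaEv, hiaPerp, hiaPi⟩ := hA
  obtain ⟨ic, hicEv, hicPerp, hicPi⟩ := hC
  have hfun : ∀ f g : X → ℕ, f a = g a → f b = g b → f c = g c → f = g := by
    intro f g h1 h2 h3; funext x
    rcases hcover x with hx | hx | hx <;> rw [hx] <;> assumption
  have ht₁T : t₁ ∈ T := by rw [hTdef]; exact Set.mem_insert _ _
  have ht₂T : t₂ ∈ T := by rw [hTdef]; exact Set.mem_insert_of_mem _ rfl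
  have hTval : ∀ f ∈ T, (f a = 2 ∧ f b = 2 ∧ f c = 0) ∨ (f a = 1 ∧ f b = 0 ∧ f c = 2) := by
    intro f hf
    rw [hTdef] at hf
    simp only [Set.mem_insert_iff, Set.mem_singleton_iff] at hf
    rcases hf with rfl | rfl
    · exact Or.inl ⟨h1a, h1b, h1c⟩
    · exact Or.inr ⟨h2a, h2b, h2c⟩
  have hEvVal : ∀ f ∈ Events T,
      (f a ≤ 2 ∧ f b ≤ 2 ∧ f c = 0) ∨ (f a ≤ 1 ∧ f b = 0 ∧ f c ≤ 2) := by
    rintro f ⟨t, ht, hft⟩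
    have ha' : f a ≤ t a := hft a
    have hb' : f b ≤ t b := hft b
    have hc' : f c ≤ t c := hft c
    rcases hTval t ht with ⟨u, v, w⟩ | ⟨u, v, w⟩
    · left; omega
    · right; omega
  have hEvOf : ∀ f : X → ℕ,
      ((f a ≤ 2 ∧ f b ≤ 2 ∧ f c = 0) ∨ (f a ≤ 1 ∧ f b = 0 ∧ f c ≤ 2)) → f ∈ Events T := by
    rintro f (⟨u, v, w⟩ | ⟨u, v, w⟩)
    · refine ⟨t₁, ht₁T, fun x => ?_⟩
      show f x ≤ t₁ x
      rcases hcover x with hx | hx | hx <;> rw [hx]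
      · rw [h1a]; omega
      · rw [h1b]; omega
      · rw [h1c]; omega
    · refine ⟨t₂, ht₂T, fun x => ?_⟩
      show f x ≤ t₂ x
      rcases hcover x with hx | hx | hx <;> rw [hx]
      · rw [h2a]; omega
      · rw [h2b]; omega
      · rw [h2c]; omega
  have hApx : ∀ f g : X → ℕ, Approx T f g →
      f = g ∨
      (f a = 2 ∧ f b = 2 ∧ f c = 0 ∧ g a = 1 ∧ g b = 0 ∧ g c = 2) ∨
      (g a = 2 ∧ g b = 2 ∧ g c = 0 ∧ f a = 1 ∧ f b = 0 ∧ f c = 2) ∨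
      (f a = 1 ∧ f b = 2 ∧ f c = 0 ∧ g a = 0 ∧ g b = 0 ∧ g c = 2) ∨
      (g a = 1 ∧ g b = 2 ∧ g c = 0 ∧ f a = 0 ∧ f b = 0 ∧ f c = 2) := by
    rintro f g ⟨e, -, hfT, hgT⟩
    have hf := hTval _ hfT
    have hg := hTval _ hgT
    simp only [Pi.add_apply] at hf hg
    rcases hf with ⟨f1, f2, f3⟩ | ⟨f1, f2, f3⟩ <;> rcases hg with ⟨g1, g2, g3⟩ | ⟨g1, g2, g3⟩
    · exact Or.inl (hfun f g (by omega) (by omega) (by omega))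
    · rcases (show (f a = 2 ∧ g a = 1) ∨ (f a = 1 ∧ g a = 0) by omega) with ⟨u, v⟩ | ⟨u, v⟩
      · exact Or.inr (Or.inl ⟨u, by omega, by omega, v, by omega, by omega⟩)
      · exact Or.inr (Or.inr (Or.inr (Or.inl ⟨u, by omega, by omega, v, by omega, by omega⟩)))
    · rcases (show (g a = 2 ∧ f a = 1) ∨ (g a = 1 ∧ f a = 0) by omega) with ⟨u, v⟩ | ⟨u, v⟩
      · exact Or.inr (Or.inr (Or.inl ⟨u, by omega, by omega, v, by omega, by omega⟩))
      · exact Or.inr (Or.inr (Or.inr (Or.inr ⟨u, by omega, by omega, v, by omega, by omega⟩)))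
    · exact Or.inl (hfun f g (by omega) (by omega) (by omega))
  have hApxSelf : ∀ f ∈ Events T, Approx T f f := by
    rintro f ⟨t, ht, hft⟩
    have key : f + (t - f) = t := by
      funext x
      have hx : f x ≤ t x := hft x
      simp only [Pi.add_apply, Pi.sub_apply]
      omega
    exact ⟨t - f, ⟨t, ht, fun x => Nat.sub_le _ _⟩, by rw [key]; exact ht, by rw [key]; exact ht⟩
  have hApxSymm : ∀ f g : X → ℕ, Approx T f g → Approx T g f := by
    rintro f g ⟨e, he, u, v⟩; exact ⟨e, he, v, u⟩
  have daa : δ a a = 1 := by rw [hδ]; simp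
  have dab : δ a b = 0 := by rw [hδ]; simp [Ne.symm hab]
  have dac : δ a c = 0 := by rw [hδ]; simp [Ne.symm hac]
  have dba : δ b a = 0 := by rw [hδ]; simp [hab]
  have dbb : δ b b = 1 := by rw [hδ]; simp
  have dbc : δ b c = 0 := by rw [hδ]; simp [Ne.symm hbc]
  have dca : δ c a = 0 := by rw [hδ]; simp [hac]
  have dcb : δ c b = 0 := by rw [hδ]; simp [hbc]
  have dcc : δ c c = 1 := by rw [hδ]; simp
  set K1 : X → ℕ := δ a + δ c with hK1def
  set F120 : X → ℕ := δ a + δ b + δ b with hF120def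
  set F002 : X → ℕ := δ c + δ c with hF002def
  have cK1a : K1 a = 1 := by rw [hK1def]; simp only [Pi.add_apply]; omega
  have cK1b : K1 b = 0 := by rw [hK1def]; simp only [Pi.add_apply]; omega
  have cK1c : K1 c = 1 := by rw [hK1def]; simp only [Pi.add_apply]; omega
  have cFa : F120 a = 1 := by rw [hF120def]; simp only [Pi.add_apply]; omega
  have cFb : F120 b = 2 := by rw [hF120def]; simp only [Pi.add_apply]; omega
  have cFc : F120 c = 0 := by rw [hF120def]; simp only [Pi.add_apply]; omega
  have cGa : F002 a = 0 := by rw [hF002def]; simp only [Pi.add_apply]; omega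
  have cGb : F002 b = 0 := by rw [hF002def]; simp only [Pi.add_apply]; omega
  have cGc : F002 c = 2 := by rw [hF002def]; simp only [Pi.add_apply]; omega
  have eδa : δ a ∈ Events T := hEvOf _ (by omega)
  have eδc : δ c ∈ Events T := hEvOf _ (by omega)
  have eK1 : K1 ∈ Events T := hEvOf _ (by omega)
  have eF120 : F120 ∈ Events T := hEvOf _ (by omega)
  have eF002 : F002 ∈ Events T := hEvOf _ (by omega)
  have hApxPair : Approx T F120 F002 := by
    refine ⟨δ a, eδa, ?_, ?_⟩
    · have key : F120 + δ a = t₁ := hfun _ _ (by simp only [Pi.add_apply]; omega)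
        (by simp only [Pi.add_apply]; omega) (by simp only [Pi.add_apply]; omega)
      rw [key]; exact ht₁T
    · have key : F002 + δ a = t₂ := hfun _ _ (by simp only [Pi.add_apply]; omega)
        (by simp only [Pi.add_apply]; omega) (by simp only [Pi.add_apply]; omega)
      rw [key]; exact ht₂T
  have hclassEq : piE T F002 = piE T F120 := by
    ext g
    simp only [piE, Set.mem_setOf_eq]
    constructor
    · rintro ⟨hg, hgx⟩
      refine ⟨hg, ?_⟩
      rcases hApx _ _ hgx with heq | d | d | d | d
      · rw [heq]; exact hApxSymm _ _ hApxPair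
      · exfalso; omega
      · exfalso; omega
      · have key : g = F120 := hfun _ _ (by omega) (by omega) (by omega)
        rw [key]; exact hApxSelf _ eF120
      · exfalso; omega
    · rintro ⟨hg, hgx⟩
      refine ⟨hg, ?_⟩
      rcases hApx _ _ hgx with heq | d | d | d | d
      · rw [heq]; exact hApxPair
      · exfalso; omega
      · exfalso; omega
      · exfalso; omega
      · have key : g = F002 := hfun _ _ (by omega) (by omega) (by omega)
        rw [key]; exact hApxSelf _ eF002
  have hub1a : piLe T (δ a) K1 := by
    refine ⟨δ c, eδc, ?_, ?_⟩
    · show δ a + δ c ∈ Events T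
      rw [← hK1def]; exact eK1
    · rw [← hK1def]
  have hub1c : piLe T (δ c) K1 := by
    refine ⟨δ a, eδa, ?_, ?_⟩
    · show δ c + δ a ∈ Events T
      exact hEvOf _ (by simp only [Pi.add_apply]; omega)
    · have key : δ c + δ a = K1 := hfun _ _ (by simp only [Pi.add_apply]; omega)
        (by simp only [Pi.add_apply]; omega) (by simp only [Pi.add_apply]; omega)
      rw [key]
  have hub2a : piLe T (δ a) F120 := by
    refine ⟨δ b + δ b, hEvOf _ (by simp only [Pi.add_apply]; omega), ?_, ?_⟩
    · show δ a + (δ b + δ b) ∈ Events T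
      exact hEvOf _ (by simp only [Pi.add_apply]; omega)
    · have key : δ a + (δ b + δ b) = F120 := hfun _ _ (by simp only [Pi.add_apply]; omega)
        (by simp only [Pi.add_apply]; omega) (by simp only [Pi.add_apply]; omega)
      rw [key]
  have hub2c : piLe T (δ c) F120 := by
    refine ⟨δ c, eδc, ?_, ?_⟩
    · show δ c + δ c ∈ Events T
      rw [← hF002def]; exact eF002
    · have key : δ c + δ c = F002 := hF002def.symm
      rw [key]; exact hclassEq
  have hk1 : piLe T h K1 := hlub K1 eK1 hub1a hub1c
  have hk2 : piLe T h F120 := hlub F120 eF120 hub2a hub2c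
  have hreach : ∀ k : X → ℕ, k ∈ Events T → piLe T h k →
      ∃ i : X → ℕ, h + i ∈ Events T ∧ Approx T k (h + i) := by
    rintro k hkEv ⟨i, hiEv, hperp, hpi⟩
    refine ⟨i, hperp, ?_⟩
    have hm : k ∈ piE T (h + i) := by
      rw [hpi]
      simp only [piE, Set.mem_setOf_eq]
      exact ⟨hkEv, hApxSelf k hkEv⟩
    simp only [piE, Set.mem_setOf_eq] at hm
    exact hm.2
  have hfa : 1 ≤ (δ a + ia) a := by simp only [Pi.add_apply]; omega
  have hmemA : Approx T h (δ a + ia) := by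
    have hm : h ∈ piE T (δ a + ia) := by
      rw [hiaPi]
      simp only [piE, Set.mem_setOf_eq]
      exact ⟨hhEv, hApxSelf h hhEv⟩
    simp only [piE, Set.mem_setOf_eq] at hm
    exact hm.2
  have HA : 1 ≤ h a ∨ h = F002 := by
    rcases hApx _ _ hmemA with heq | d | d | d | d
    · left; have := congrFun heq a; omega
    · left; omega
    · left; omega
    · left; omega
    · right; exact hfun _ _ (by omega) (by omega) (by omega)
  have hgc : 1 ≤ (δ c + ic) c := by simp only [Pi.add_apply]; omega
  have hmemC : Approx T h (δ c + ic) := by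
    have hm : h ∈ piE T (δ c + ic) := by
      rw [hicPi]
      simp only [piE, Set.mem_setOf_eq]
      exact ⟨hhEv, hApxSelf h hhEv⟩
    simp only [piE, Set.mem_setOf_eq] at hm
    exact hm.2
  have hEvh := hEvVal h hhEv
  have HC : (h a ≤ 1 ∧ h b = 0 ∧ 1 ≤ h c) ∨ h = t₁ ∨ h = F120 := by
    rcases hApx _ _ hmemC with heq | d | d | d | d
    · left
      have e1 := congrFun heq a
      have e2 := congrFun heq b
      have e3 := congrFun heq c
      omega
    · right; left; exact hfun _ _ (by omega) (by omega) (by omega)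
    · left; omega
    · right; right; exact hfun _ _ (by omega) (by omega) (by omega)
    · left; omega
  have hcoord :
      (h a = 1 ∧ h b = 0 ∧ h c = 1) ∨ (h a = 1 ∧ h b = 0 ∧ h c = 2) ∨
      (h a = 2 ∧ h b = 2 ∧ h c = 0) ∨ (h a = 1 ∧ h b = 2 ∧ h c = 0) ∨
      (h a = 0 ∧ h b = 0 ∧ h c = 2) := by
    rcases HA with ha1 | heq
    · rcases HC with hd | heq | heq
      · omega
      · have e1 := congrFun heq a
        have e2 := congrFun heq b
        have e3 := congrFun heq c
        omega
      · have e1 := congrFun heq a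
        have e2 := congrFun heq b
        have e3 := congrFun heq c
        omega
    · have e1 := congrFun heq a
      have e2 := congrFun heq b
      have e3 := congrFun heq c
      omega
  rcases hcoord with hco | hco | hco | hco | hco
  · obtain ⟨i, hEv2, hax⟩ := hreach F120 eF120 hk2
    have pa : (h + i) a = h a + i a := rfl
    have pb : (h + i) b = h b + i b := rfl
    have pc : (h + i) c = h c + i c := rfl
    have hev3 := hEvVal _ hEv2
    rcases hApx _ _ hax with heq | d | d | d | d
    · have e1 := congrFun heq a
      have e2 := congrFun heq b
      have e3 := congrFun heq c
      omega
    all_goals omega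
  · obtain ⟨i, hEv2, hax⟩ := hreach K1 eK1 hk1
    have pa : (h + i) a = h a + i a := rfl
    have pb : (h + i) b = h b + i b := rfl
    have pc : (h + i) c = h c + i c := rfl
    have hev3 := hEvVal _ hEv2
    rcases hApx _ _ hax with heq | d | d | d | d
    · have e1 := congrFun heq a
      have e2 := congrFun heq b
      have e3 := congrFun heq c
      omega
    all_goals omega
  · obtain ⟨i, hEv2, hax⟩ := hreach K1 eK1 hk1
    have pa : (h + i) a = h a + i a := rfl
    have pb : (h + i) b = h b + i b := rfl
    have pc : (h + i) c = h c + i c := rfl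
    have hev3 := hEvVal _ hEv2
    rcases hApx _ _ hax with heq | d | d | d | d
    · have e1 := congrFun heq a
      have e2 := congrFun heq b
      have e3 := congrFun heq c
      omega
    all_goals omega
  · obtain ⟨i, hEv2, hax⟩ := hreach K1 eK1 hk1
    have pa : (h + i) a = h a + i a := rfl
    have pb : (h + i) b = h b + i b := rfl
    have pc : (h + i) c = h c + i c := rfl
    have hev3 := hEvVal _ hEv2
    rcases hApx _ _ hax with heq | d | d | d | d
    · have e1 := congrFun heq a
      have e2 := congrFun heq b
      have e3 := congrFun heq c
      omega
    all_goals omega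
  · obtain ⟨i, hEv2, hax⟩ := hreach K1 eK1 hk1
    have pa : (h + i) a = h a + i a := rfl
    have pb : (h + i) b = h b + i b := rfl
    have pc : (h + i) c = h c + i c := rfl
    have hev3 := hEvVal _ hEv2
    rcases hApx _ _ hax with heq | d | d | d | d
    · have e1 := congrFun heq a
      have e2 := congrFun heq b
      have e3 := congrFun heq c
      omega
    all_goals omega
end

section
/- In the example, π(δ_a) ≤ π(2·δ_c) and π(2·δ_c) ≤ π(t₂ − δ_a) (note t₂ − δ_a = 2·δ_c, so π(t₂ − δ_a) is the orthosupplement of π(δ_a)), yet there do not exist v₁, v₂ ∈ 𝓔(X,T) with v₁ + v₂ ∈ 𝓔(X,T), π(v₁) ≤ π(δ_c), π(v₂) ≤ π(δ_c) and π(v₁ + v₂) = π(δ_a). Consequently the effect algebra Π(X) of the example is not homogeneous. -/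
theorem example_not_homogeneous {X : Type*} [DecidableEq X] (a b c : X)
    (hab : a ≠ b) (hac : a ≠ c) (hbc : b ≠ c)
    (hcover : ∀ x : X, x = a ∨ x = b ∨ x = c)
    (t₁ t₂ : X → ℕ)
    (h1a : t₁ a = 2) (h1b : t₁ b = 2) (h1c : t₁ c = 0)
    (h2a : t₂ a = 1) (h2b : t₂ b = 0) (h2c : t₂ c = 2)
    (T : Set (X → ℕ)) (hTdef : T = {t₁, t₂})
    (δ : X → X → ℕ) (hδ : ∀ x y, δ x y = if y = x then 1 else 0) :
    piLe T (δ a) (2 • δ c) ∧ piLe T (2 • δ c) (t₂ - δ a) ∧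
      ¬ ∃ v₁ ∈ Events T, ∃ v₂ ∈ Events T, v₁ + v₂ ∈ Events T ∧
          piLe T v₁ (δ c) ∧ piLe T v₂ (δ c) ∧ piE T (v₁ + v₂) = piE T (δ a) := by
  have hba : b ≠ a := hab.symm
  have hca : c ≠ a := hac.symm
  have hcb : c ≠ b := hbc.symm
  have hδaa : δ a a = 1 := by simp [hδ]
  have hδab : δ a b = 0 := by simp [hδ, hba]
  have hδac : δ a c = 0 := by simp [hδ, hca]
  have hδba : δ b a = 0 := by simp [hδ, hab]
  have hδbb : δ b b = 1 := by simp [hδ]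
  have hδbc : δ b c = 0 := by simp [hδ, hcb]
  have hδca : δ c a = 0 := by simp [hδ, hac]
  have hδcb : δ c b = 0 := by simp [hδ, hbc]
  have hδcc : δ c c = 1 := by simp [hδ]
  have memT : ∀ f : X → ℕ, f ∈ T ↔ f = t₁ ∨ f = t₂ := by
    intro f; rw [hTdef]; simp [Set.mem_insert_iff]
  have funeq : ∀ f g : X → ℕ, f a = g a → f b = g b → f c = g c → f = g := by
    intro f g ha hb hc; funext x
    rcases hcover x with h | h | h <;> subst h <;> assumption
  -- reflexivity of membership in one's own class
  have hrefl : ∀ f ∈ Events T, f ∈ piE T f := by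
    rintro f ⟨t, htT, hft⟩
    refine ⟨⟨t, htT, hft⟩, t - f, ⟨t, htT, ?_⟩, ?_, ?_⟩
    · intro x; exact Nat.sub_le _ _
    all_goals
      have hft' : f + (t - f) = t := by
        funext x; have hx : f x ≤ t x := hft x
        simp only [Pi.add_apply, Pi.sub_apply]; omega
      rw [hft']; exact htT
  have ht1T : t₁ ∈ T := by rw [hTdef]; left; rfl
  have ht2T : t₂ ∈ T := by rw [hTdef]; right; rfl
  have hδaE : δ a ∈ Events T := by
    refine ⟨t₂, ht2T, fun x => ?_⟩
    rcases hcover x with h | h | h <;> subst h <;> simp [*]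
  -- Part 1
  have part1 : piLe T (δ a) (2 • δ c) := by
    refine ⟨2 • δ b, ⟨t₁, ht1T, fun x => ?_⟩, ⟨t₁, ht1T, fun x => ?_⟩, ?_⟩
    · rcases hcover x with h | h | h <;> subst h <;> simp [*]
    · rcases hcover x with h | h | h <;> subst h <;> simp [*]
    · -- π(δ a + 2δ b) = π(2 δ c)
      ext g
      constructor
      · rintro ⟨hgE, h, hhE, hgh, hfh⟩
        rcases (memT _).1 hfh with e | e
        · -- h = δ a
          have ea := congrFun e a; have eb := congrFun e b; have ec := congrFun e c
          simp [*] at ea eb ec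
          have hha : h = δ a := funeq _ _ (by omega) (by omega) (by omega)
          refine ⟨hgE, δ a, hδaE, ?_, ?_⟩
          · rw [← hha]; exact hgh
          · have : (2 • δ c) + δ a = t₂ :=
              funeq _ _ (by simp [*]) (by simp [*]) (by simp [*])
            rw [this]; exact ht2T
        · have eb := congrFun e b; simp [*] at eb
      · rintro ⟨hgE, h, hhE, hgh, hfh⟩
        rcases (memT _).1 hfh with e | e
        · have ec := congrFun e c; simp [*] at ec
        · have ea := congrFun e a; have eb := congrFun e b; have ec := congrFun e c
          simp [*] at ea eb ec
          have hha : h = δ a := funeq _ _ (by omega) (by omega) (by omega)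
          refine ⟨hgE, δ a, hδaE, ?_, ?_⟩
          · rw [← hha]; exact hgh
          · have : (δ a + 2 • δ b) + δ a = t₁ :=
              funeq _ _ (by simp [*]) (by simp [*]) (by simp [*])
            rw [this]; exact ht1T
  -- Part 2
  have ht2sub : t₂ - δ a = 2 • δ c :=
    funeq _ _ (by simp [*]) (by simp [*]) (by simp [*])
  have h2δcE : (2 • δ c : X → ℕ) ∈ Events T := by
    refine ⟨t₂, ht2T, fun x => ?_⟩
    rcases hcover x with h | h | h <;> subst h <;> simp [*]
  have part2 : piLe T (2 • δ c) (t₂ - δ a) := by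
    rw [ht2sub]
    refine ⟨0, ⟨t₁, ht1T, fun x => ?_⟩, ?_, ?_⟩
    · simp
    · show (2 • δ c) + 0 ∈ Events T
      rw [add_zero]; exact h2δcE
    · rw [add_zero]
  refine ⟨part1, part2, ?_⟩
  -- Part 3
  rintro ⟨v₁, hv₁E, v₂, hv₂E, hsE, hle1, hle2, hpi⟩
  -- any v with piLe v (δ c) has v a = 0, v b = 0, v c ≤ 1
  have key : ∀ v : X → ℕ, piLe T v (δ c) → v a = 0 ∧ v b = 0 ∧ v c ≤ 1 := by
    rintro v ⟨i, hiE, hperp, hpieq⟩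
    have hmem : v + i ∈ piE T (δ c) := by rw [← hpieq]; exact hrefl _ hperp
    obtain ⟨-, h, hhE, h1, h2⟩ := hmem
    rcases (memT _).1 h2 with e | e
    · have ec := congrFun e c; simp [*] at ec
    · have ea := congrFun e a; have eb := congrFun e b; have ec := congrFun e c
      simp [*] at ea eb ec
      rcases (memT _).1 h1 with e' | e'
      · have ec' := congrFun e' c; simp [*] at ec' <;> omega
      · have ea' := congrFun e' a; have eb' := congrFun e' b
        have ec' := congrFun e' c
        simp [*] at ea' eb' ec'
        omega
  obtain ⟨h1a', h1b', h1c'⟩ := key v₁ hle1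
  obtain ⟨h2a', h2b', h2c'⟩ := key v₂ hle2
  -- δ a belongs to π(v₁+v₂)
  have hmem : δ a ∈ piE T (v₁ + v₂) := by rw [hpi]; exact hrefl _ hδaE
  obtain ⟨-, h, hhE, hdh, hsh⟩ := hmem
  rcases (memT _).1 hdh with e | e
  · have ea := congrFun e a; have eb := congrFun e b
    simp [*] at ea eb
    rcases (memT _).1 hsh with e' | e'
    · have ea' := congrFun e' a; simp [*] at ea' <;> omega
    · have eb' := congrFun e' b; simp [*] at eb' <;> omega
  · have ea := congrFun e a; have ec := congrFun e c
    simp [*] at ea ec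
    rcases (memT _).1 hsh with e' | e'
    · have ec' := congrFun e' c; simp [*] at ec' <;> omega
    · have ea' := congrFun e' a; simp [*] at ea' <;> omega
end

section
/- In the example, call π(f) (for f ∈ 𝓔(X,T)) sharp if for every t ∈ T with f ≤ t and every g ∈ 𝓔(X,T), π(g) ≤ π(f) and π(g) ≤ π(t − f) imply π(g) = π(f₀). Then for every f ∈ 𝓔(X,T), π(f) is sharp if and only if π(f) ∈ {π(f₀), π(2·δ_a), π(2·δ_b), π(t₁)}. -/
theorem example_sharp_elements {X : Type*} [DecidableEq X] (a b c : X)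
    (hab : a ≠ b) (hac : a ≠ c) (hbc : b ≠ c)
    (hcover : ∀ x : X, x = a ∨ x = b ∨ x = c)
    (t₁ t₂ : X → ℕ)
    (h1a : t₁ a = 2) (h1b : t₁ b = 2) (h1c : t₁ c = 0)
    (h2a : t₂ a = 1) (h2b : t₂ b = 0) (h2c : t₂ c = 2)
    (T : Set (X → ℕ)) (hTdef : T = {t₁, t₂})
    (δ : X → X → ℕ) (hδ : ∀ x y, δ x y = if y = x then 1 else 0) :
    ∀ f ∈ Events T,
      ((∀ t ∈ T, f ≤ t → ∀ g ∈ Events T,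
          piLe T g f → piLe T g (t - f) → piE T g = piE T (0 : X → ℕ)) ↔
        (piE T f = piE T (0 : X → ℕ) ∨ piE T f = piE T (2 • δ a) ∨
          piE T f = piE T (2 • δ b) ∨ piE T f = piE T t₁)) := by
  have hba : b ≠ a := hab.symm
  have hca : c ≠ a := hac.symm
  have hcb : c ≠ b := hbc.symm
  have hext : ∀ u v : X → ℕ, u a = v a → u b = v b → u c = v c → u = v := by
    intro u v h1 h2 h3; funext x
    rcases hcover x with rfl | rfl | rfl <;> assumption
  have hle3 : ∀ u v : X → ℕ, u a ≤ v a → u b ≤ v b → u c ≤ v c → u ≤ v := by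
    intro u v h1 h2 h3
    rw [Pi.le_def]
    intro x
    rcases hcover x with h | h | h <;> rw [h] <;> assumption
  have hT : ∀ u : X → ℕ, u ∈ T ↔
      ((u a = 2 ∧ u b = 2 ∧ u c = 0) ∨ (u a = 1 ∧ u b = 0 ∧ u c = 2)) := by
    intro u
    rw [hTdef]
    simp only [Set.mem_insert_iff, Set.mem_singleton_iff]
    constructor
    · rintro (rfl | rfl)
      · exact Or.inl ⟨h1a, h1b, h1c⟩
      · exact Or.inr ⟨h2a, h2b, h2c⟩
    · rintro (⟨x1, x2, x3⟩ | ⟨x1, x2, x3⟩)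
      · exact Or.inl (hext u t₁ (by omega) (by omega) (by omega))
      · exact Or.inr (hext u t₂ (by omega) (by omega) (by omega))
  have ht₁T : t₁ ∈ T := by rw [hT]; exact Or.inl ⟨h1a, h1b, h1c⟩
  have ht₂T : t₂ ∈ T := by rw [hT]; exact Or.inr ⟨h2a, h2b, h2c⟩
  have hEv : ∀ u : X → ℕ, u ∈ Events T ↔
      ((u a ≤ 2 ∧ u b ≤ 2 ∧ u c = 0) ∨ (u a ≤ 1 ∧ u b = 0 ∧ u c ≤ 2)) := by
    intro u
    constructor
    · rintro ⟨t, htT, hle⟩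
      rw [hT] at htT
      have l1 : u a ≤ t a := hle a
      have l2 : u b ≤ t b := hle b
      have l3 : u c ≤ t c := hle c
      rcases htT with ⟨_, _, _⟩ | ⟨_, _, _⟩
      · exact Or.inl ⟨by omega, by omega, by omega⟩
      · exact Or.inr ⟨by omega, by omega, by omega⟩
    · rintro (⟨x1, x2, x3⟩ | ⟨x1, x2, x3⟩)
      · exact ⟨t₁, ht₁T, hle3 u t₁ (by omega) (by omega) (by omega)⟩
      · exact ⟨t₂, ht₂T, hle3 u t₂ (by omega) (by omega) (by omega)⟩
  have hApp : ∀ u w : X → ℕ, u ∈ piE T w ↔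
      (u ∈ Events T ∧ ∃ h : X → ℕ, u + h ∈ T ∧ w + h ∈ T) := by
    intro u w
    simp only [piE, Approx, Set.mem_setOf_eq]
    constructor
    · rintro ⟨hE, h, _, h1, h2⟩
      exact ⟨hE, h, h1, h2⟩
    · rintro ⟨hE, h, h1, h2⟩
      exact ⟨hE, h, ⟨u + h, h1, fun x => Nat.le_add_left _ _⟩, h1, h2⟩
  have hself : ∀ u ∈ Events T, u ∈ piE T u := by
    intro u hu
    obtain ⟨t, htT, hle⟩ := hu
    rw [hApp]
    have heq : u + (t - u) = t := by
      funext x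
      have hx : u x ≤ t x := hle x
      simp only [Pi.add_apply, Pi.sub_apply]
      omega
    refine ⟨⟨t, htT, hle⟩, t - u, ?_, ?_⟩ <;> rw [heq] <;> exact htT
  have key0 : ∀ u w : X → ℕ, u ∈ piE T w → w a = 0 → w b = 0 → w c = 0 →
      u a = 0 ∧ u b = 0 ∧ u c = 0 := by
    intro u w hu wa wb wc
    rw [hApp] at hu
    obtain ⟨_, h, h1, h2⟩ := hu
    rw [hT] at h1 h2
    simp only [Pi.add_apply] at h1 h2
    rcases h1 with ⟨_, _, _⟩ | ⟨_, _, _⟩ <;> rcases h2 with ⟨_, _, _⟩ | ⟨_, _, _⟩ <;> omega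
  have hgzero : ∀ g ∈ Events T, piE T g = piE T (0 : X → ℕ) →
      g a = 0 ∧ g b = 0 ∧ g c = 0 := by
    intro g hg hpi
    have hm := hself g hg
    rw [hpi] at hm
    exact key0 g 0 hm rfl rfl rfl
  have hpi0 : ∀ g : X → ℕ, g a = 0 → g b = 0 → g c = 0 →
      piE T g = piE T (0 : X → ℕ) := by
    intro g h1 h2 h3
    have : g = (0 : X → ℕ) := hext g 0 h1 h2 h3
    rw [this]
  have dar : δ a a = 1 := by rw [hδ]; simp
  have dab : δ a b = 0 := by rw [hδ]; simp [hba]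
  have dac : δ a c = 0 := by rw [hδ]; simp [hca]
  have dba : δ b a = 0 := by rw [hδ]; simp [hab]
  have dbb : δ b b = 1 := by rw [hδ]; simp
  have dbc : δ b c = 0 := by rw [hδ]; simp [hcb]
  have dca : δ c a = 0 := by rw [hδ]; simp [hac]
  have dcb : δ c b = 0 := by rw [hδ]; simp [hbc]
  have dcc : δ c c = 1 := by rw [hδ]; simp
  have s2aa : (2 • δ a) a = 2 := by simp [Pi.smul_apply, dar]
  have s2ab : (2 • δ a) b = 0 := by simp [Pi.smul_apply, dab]
  have s2ac : (2 • δ a) c = 0 := by simp [Pi.smul_apply, dac]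
  have s2ba : (2 • δ b) a = 0 := by simp [Pi.smul_apply, dba]
  have s2bb : (2 • δ b) b = 2 := by simp [Pi.smul_apply, dbb]
  have s2bc : (2 • δ b) c = 0 := by simp [Pi.smul_apply, dbc]
  have hclassT : ∀ v ∈ T, ∀ u, u ∈ piE T v ↔ (u ∈ Events T ∧ u ∈ T) := by
    intro v hv u
    rw [hApp]
    constructor
    · rintro ⟨hE, h, h1, h2⟩
      refine ⟨hE, ?_⟩
      rw [hT] at h1 h2 hv ⊢
      simp only [Pi.add_apply] at h1 h2
      rcases hv with ⟨_, _, _⟩ | ⟨_, _, _⟩ <;> rcases h2 with ⟨_, _, _⟩ | ⟨_, _, _⟩ <;>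
        rcases h1 with ⟨_, _, _⟩ | ⟨_, _, _⟩ <;> omega
    · rintro ⟨hE, hu⟩
      exact ⟨hE, 0, by rwa [add_zero], by rwa [add_zero]⟩
  have hclassTT : piE T t₂ = piE T t₁ := by
    ext u
    rw [hclassT t₂ ht₂T u, hclassT t₁ ht₁T u]
  have hclass12 : ∀ v : X → ℕ,
      ((v a = 1 ∧ v b = 2 ∧ v c = 0) ∨ (v a = 0 ∧ v b = 0 ∧ v c = 2)) →
      ∀ u, u ∈ piE T v ↔ (u ∈ Events T ∧ u + δ a ∈ T) := by
    intro v hv u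
    rw [hApp]
    constructor
    · rintro ⟨hE, h, h1, h2⟩
      refine ⟨hE, ?_⟩
      have hha : h a = 1 ∧ h b = 0 ∧ h c = 0 := by
        rw [hT] at h2
        simp only [Pi.add_apply] at h2
        rcases hv with ⟨_, _, _⟩ | ⟨_, _, _⟩ <;> rcases h2 with ⟨_, _, _⟩ | ⟨_, _, _⟩ <;> omega
      have hhd : h = δ a := hext h (δ a) (by omega) (by omega) (by omega)
      rwa [hhd] at h1
    · rintro ⟨hE, hu⟩
      refine ⟨hE, δ a, hu, ?_⟩
      rw [hT]
      simp only [Pi.add_apply, dar, dab, dac]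
      rcases hv with ⟨_, _, _⟩ | ⟨_, _, _⟩ <;> omega
  intro f hf
  constructor
  · -- sharp → f is one of the four classes
    intro hsharp
    have hbad : ∀ t g i₁ i₂ : X → ℕ, t ∈ T → f ≤ t → g ∈ Events T →
        i₁ ∈ Events T → g + i₁ ∈ Events T → piE T (g + i₁) = piE T f →
        i₂ ∈ Events T → g + i₂ ∈ Events T → piE T (g + i₂) = piE T (t - f) →
        (g a ≠ 0 ∨ g b ≠ 0 ∨ g c ≠ 0) → False := by
      intro t g i₁ i₂ htT hft hgE hi1 hgi1 hpi1 hi2 hgi2 hpi2 hne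
      have hz := hsharp t htT hft g hgE ⟨i₁, hi1, hgi1, hpi1⟩ ⟨i₂, hi2, hgi2, hpi2⟩
      obtain ⟨z1, z2, z3⟩ := hgzero g hgE hz
      rcases hne with h | h | h <;> omega
    have hδaE : δ a ∈ Events T := by rw [hEv]; omega
    have hδbE : δ b ∈ Events T := by rw [hEv]; omega
    have hδcE : δ c ∈ Events T := by rw [hEv]; omega
    have h0E : (0 : X → ℕ) ∈ Events T := by
      rw [hEv]; left; simp
    have h2aE : (2 • δ a) ∈ Events T := by rw [hEv]; omega
    have h2bE : (2 • δ b) ∈ Events T := by rw [hEv]; omega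
    rcases (hEv f).mp hf with ⟨hfa, hfb, hfc⟩ | ⟨hfa, hfb, hfc⟩
    · -- f ≤ t₁ : f a ≤ 2, f b ≤ 2, f c = 0
      have hft1 : f ≤ t₁ := hle3 f t₁ (by omega) (by omega) (by omega)
      have ha3 : f a = 0 ∨ f a = 1 ∨ f a = 2 := by omega
      have hb3 : f b = 0 ∨ f b = 1 ∨ f b = 2 := by omega
      rcases ha3 with ha | ha | ha <;> rcases hb3 with hb | hb | hb
      · -- (0,0,0)
        exact Or.inl (hpi0 f ha hb hfc)
      · -- (0,1,0) bad: g = δ b, i₁ = 0, i₂ = 2δa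
        exfalso
        refine hbad t₁ (δ b) 0 (2 • δ a) ht₁T hft1 hδbE h0E ?_ ?_ h2aE ?_ ?_ (by omega)
        · rw [add_zero]; exact hδbE
        · rw [add_zero]
          exact congrArg (piE T) (hext (δ b) f (by omega) (by omega) (by omega))
        · rw [hEv]; simp only [Pi.add_apply]; omega
        · refine congrArg (piE T) (hext _ _ ?_ ?_ ?_) <;>
            simp only [Pi.add_apply, Pi.sub_apply] <;> omega
      · -- (0,2,0) good: 2δb
        refine Or.inr (Or.inr (Or.inl ?_))
        exact congrArg (piE T) (hext f (2 • δ b) (by omega) (by omega) (by omega))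
      · -- (1,0,0) bad: g = δ a, i₁ = 0, i₂ = 2δb
        exfalso
        refine hbad t₁ (δ a) 0 (2 • δ b) ht₁T hft1 hδaE h0E ?_ ?_ h2bE ?_ ?_ (by omega)
        · rw [add_zero]; exact hδaE
        · rw [add_zero]
          exact congrArg (piE T) (hext (δ a) f (by omega) (by omega) (by omega))
        · rw [hEv]; simp only [Pi.add_apply]; omega
        · refine congrArg (piE T) (hext _ _ ?_ ?_ ?_) <;>
            simp only [Pi.add_apply, Pi.sub_apply] <;> omega
      · -- (1,1,0) bad: g = δ a + δ b, i₁ = i₂ = 0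
        exfalso
        have hgE : δ a + δ b ∈ Events T := by
          rw [hEv]; simp only [Pi.add_apply]; omega
        refine hbad t₁ (δ a + δ b) 0 0 ht₁T hft1 hgE h0E ?_ ?_ h0E ?_ ?_
          (by simp only [Pi.add_apply]; omega)
        · rw [add_zero]; exact hgE
        · rw [add_zero]
          refine congrArg (piE T) (hext _ _ ?_ ?_ ?_) <;>
            simp only [Pi.add_apply] <;> omega
        · rw [add_zero]; exact hgE
        · rw [add_zero]
          refine congrArg (piE T) (hext _ _ ?_ ?_ ?_) <;>
            simp only [Pi.add_apply, Pi.sub_apply] <;> omega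
      · -- (1,2,0) bad: g = δ a, i₁ = 2δb, i₂ = 0
        exfalso
        refine hbad t₁ (δ a) (2 • δ b) 0 ht₁T hft1 hδaE h2bE ?_ ?_ h0E ?_ ?_ (by omega)
        · rw [hEv]; simp only [Pi.add_apply]; omega
        · refine congrArg (piE T) (hext _ _ ?_ ?_ ?_) <;>
            simp only [Pi.add_apply] <;> omega
        · rw [add_zero]; exact hδaE
        · rw [add_zero]
          refine congrArg (piE T) (hext _ _ ?_ ?_ ?_) <;>
            simp only [Pi.sub_apply] <;> omega
      · -- (2,0,0) good: 2δa
        refine Or.inr (Or.inl ?_)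
        exact congrArg (piE T) (hext f (2 • δ a) (by omega) (by omega) (by omega))
      · -- (2,1,0) bad: g = δ b, i₁ = 2δa, i₂ = 0
        exfalso
        refine hbad t₁ (δ b) (2 • δ a) 0 ht₁T hft1 hδbE h2aE ?_ ?_ h0E ?_ ?_ (by omega)
        · rw [hEv]; simp only [Pi.add_apply]; omega
        · refine congrArg (piE T) (hext _ _ ?_ ?_ ?_) <;>
            simp only [Pi.add_apply] <;> omega
        · rw [add_zero]; exact hδbE
        · rw [add_zero]
          refine congrArg (piE T) (hext _ _ ?_ ?_ ?_) <;>
            simp only [Pi.sub_apply] <;> omega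
      · -- (2,2,0) good: t₁
        refine Or.inr (Or.inr (Or.inr ?_))
        exact congrArg (piE T) (hext f t₁ (by omega) (by omega) (by omega))
    · -- f ≤ t₂ : f a ≤ 1, f b = 0, f c ≤ 2
      have hft2 : f ≤ t₂ := hle3 f t₂ (by omega) (by omega) (by omega)
      have ha2 : f a = 0 ∨ f a = 1 := by omega
      have hc3 : f c = 0 ∨ f c = 1 ∨ f c = 2 := by omega
      rcases ha2 with ha | ha <;> rcases hc3 with hc | hc | hc
      · -- (0,0,0)
        exact Or.inl (hpi0 f ha hfb hc)
      · -- (0,0,1) bad: g = δ c, i₁ = 0, i₂ = δ a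
        exfalso
        refine hbad t₂ (δ c) 0 (δ a) ht₂T hft2 hδcE h0E ?_ ?_ hδaE ?_ ?_ (by omega)
        · rw [add_zero]; exact hδcE
        · rw [add_zero]
          exact congrArg (piE T) (hext (δ c) f (by omega) (by omega) (by omega))
        · rw [hEv]; simp only [Pi.add_apply]; omega
        · refine congrArg (piE T) (hext _ _ ?_ ?_ ?_) <;>
            simp only [Pi.add_apply, Pi.sub_apply] <;> omega
      · -- (0,0,2) bad: g = δ a, i₁ = 2δb (class (1,2,0) = class f), i₂ = 0
        exfalso
        refine hbad t₂ (δ a) (2 • δ b) 0 ht₂T hft2 hδaE h2bE ?_ ?_ h0E ?_ ?_ (by omega)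
        · rw [hEv]; simp only [Pi.add_apply]; omega
        · ext u
          rw [hclass12 (δ a + 2 • δ b)
              (Or.inl (by simp only [Pi.add_apply]; omega)) u,
            hclass12 f (Or.inr (by omega)) u]
        · rw [add_zero]; exact hδaE
        · rw [add_zero]
          refine congrArg (piE T) (hext _ _ ?_ ?_ ?_) <;>
            simp only [Pi.sub_apply] <;> omega
      · -- (1,0,0) bad: g = δ a, i₁ = 0, i₂ = 2δb  (use t₁, but f ≤ t₁ also holds here)
        exfalso
        have hft1 : f ≤ t₁ := hle3 f t₁ (by omega) (by omega) (by omega)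
        refine hbad t₁ (δ a) 0 (2 • δ b) ht₁T hft1 hδaE h0E ?_ ?_ h2bE ?_ ?_ (by omega)
        · rw [add_zero]; exact hδaE
        · rw [add_zero]
          exact congrArg (piE T) (hext (δ a) f (by omega) (by omega) (by omega))
        · rw [hEv]; simp only [Pi.add_apply]; omega
        · refine congrArg (piE T) (hext _ _ ?_ ?_ ?_) <;>
            simp only [Pi.add_apply, Pi.sub_apply] <;> omega
      · -- (1,0,1) bad: g = δ c, i₁ = δ a, i₂ = 0
        exfalso
        refine hbad t₂ (δ c) (δ a) 0 ht₂T hft2 hδcE hδaE ?_ ?_ h0E ?_ ?_ (by omega)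
        · rw [hEv]; simp only [Pi.add_apply]; omega
        · refine congrArg (piE T) (hext _ _ ?_ ?_ ?_) <;>
            simp only [Pi.add_apply] <;> omega
        · rw [add_zero]; exact hδcE
        · rw [add_zero]
          refine congrArg (piE T) (hext _ _ ?_ ?_ ?_) <;>
            simp only [Pi.sub_apply] <;> omega
      · -- (1,0,2) good: f = t₂, class t₁
        refine Or.inr (Or.inr (Or.inr ?_))
        have : f = t₂ := hext f t₂ (by omega) (by omega) (by omega)
        rw [this]
        exact hclassTT
  · -- the four classes are sharp
    intro hrhs
    rcases hrhs with h | h | h | h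
    · -- f ~ 0
      obtain ⟨fa, fb, fc⟩ := hgzero f hf h
      intro t htT hft g hg hle1 hle2
      obtain ⟨i, hiE, hperp, hpi⟩ := hle1
      have hgi : g + i ∈ piE T f := by rw [← hpi]; exact hself _ hperp
      have h3 := key0 (g + i) f hgi fa fb fc
      simp only [Pi.add_apply] at h3
      exact hpi0 g (by omega) (by omega) (by omega)
    · -- f ~ 2δa, i.e. f = (2,0,0)
      have hfm : f ∈ piE T (2 • δ a) := by
        have := hself f hf; rwa [h] at this
      rw [hApp] at hfm
      obtain ⟨-, h', h1, h2⟩ := hfm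
      rw [hT] at h1 h2
      simp only [Pi.add_apply, s2aa, s2ab, s2ac] at h2
      simp only [Pi.add_apply] at h1
      have hfv : f a = 2 ∧ f b = 0 ∧ f c = 0 := by
        rcases h1 with ⟨_, _, _⟩ | ⟨_, _, _⟩ <;> rcases h2 with ⟨_, _, _⟩ | ⟨_, _, _⟩ <;> omega
      obtain ⟨fa, fb, fc⟩ := hfv
      intro t htT hft g hg hle1 hle2
      rw [hT] at htT
      rcases htT with ⟨ta, tb, tc⟩ | ⟨ta, tb, tc⟩
      swap
      · exfalso; have l1 : f a ≤ t a := hft a; omega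
      -- t = t₁ values; from hle1: g b = g c = 0; from hle2: g a = 0
      obtain ⟨i, hiE, hperp, hpi⟩ := hle1
      have hgi : g + i ∈ piE T f := by rw [← hpi]; exact hself _ hperp
      rw [hApp] at hgi
      obtain ⟨-, h', A1, A2⟩ := hgi
      rw [hT] at A1 A2
      simp only [Pi.add_apply] at A1 A2
      have hg1 : g b = 0 ∧ g c = 0 := by
        rcases A1 with ⟨_, _, _⟩ | ⟨_, _, _⟩ <;> rcases A2 with ⟨_, _, _⟩ | ⟨_, _, _⟩ <;> omega
      obtain ⟨i', hiE', hperp', hpi'⟩ := hle2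
      have hgi' : g + i' ∈ piE T (t - f) := by rw [← hpi']; exact hself _ hperp'
      rw [hApp] at hgi'
      obtain ⟨-, h'', B1, B2⟩ := hgi'
      rw [hT] at B1 B2
      simp only [Pi.add_apply, Pi.sub_apply] at B1 B2
      have hg2 : g a = 0 := by
        rcases B1 with ⟨_, _, _⟩ | ⟨_, _, _⟩ <;> rcases B2 with ⟨_, _, _⟩ | ⟨_, _, _⟩ <;> omega
      exact hpi0 g hg2 hg1.1 hg1.2
    · -- f ~ 2δb, i.e. f = (0,2,0)
      have hfm : f ∈ piE T (2 • δ b) := by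
        have := hself f hf; rwa [h] at this
      rw [hApp] at hfm
      obtain ⟨-, h', h1, h2⟩ := hfm
      rw [hT] at h1 h2
      simp only [Pi.add_apply, s2ba, s2bb, s2bc] at h2
      simp only [Pi.add_apply] at h1
      have hfv : f a = 0 ∧ f b = 2 ∧ f c = 0 := by
        rcases h1 with ⟨_, _, _⟩ | ⟨_, _, _⟩ <;> rcases h2 with ⟨_, _, _⟩ | ⟨_, _, _⟩ <;> omega
      obtain ⟨fa, fb, fc⟩ := hfv
      intro t htT hft g hg hle1 hle2
      rw [hT] at htT
      rcases htT with ⟨ta, tb, tc⟩ | ⟨ta, tb, tc⟩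
      swap
      · exfalso; have l1 : f b ≤ t b := hft b; omega
      obtain ⟨i, hiE, hperp, hpi⟩ := hle1
      have hgi : g + i ∈ piE T f := by rw [← hpi]; exact hself _ hperp
      rw [hApp] at hgi
      obtain ⟨-, h', A1, A2⟩ := hgi
      rw [hT] at A1 A2
      simp only [Pi.add_apply] at A1 A2
      have hg1 : g a = 0 ∧ g c = 0 := by
        rcases A1 with ⟨_, _, _⟩ | ⟨_, _, _⟩ <;> rcases A2 with ⟨_, _, _⟩ | ⟨_, _, _⟩ <;> omega
      obtain ⟨i', hiE', hperp', hpi'⟩ := hle2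
      have hgi' : g + i' ∈ piE T (t - f) := by rw [← hpi']; exact hself _ hperp'
      rw [hApp] at hgi'
      obtain ⟨-, h'', B1, B2⟩ := hgi'
      rw [hT] at B1 B2
      simp only [Pi.add_apply, Pi.sub_apply] at B1 B2
      have hg2 : g b = 0 := by
        rcases B1 with ⟨_, _, _⟩ | ⟨_, _, _⟩ <;> rcases B2 with ⟨_, _, _⟩ | ⟨_, _, _⟩ <;> omega
      exact hpi0 g hg1.1 hg2 hg1.2
    · -- f ~ t₁ : f ∈ T
      have hfm : f ∈ piE T t₁ := by
        have := hself f hf; rwa [h] at this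
      rw [hclassT t₁ ht₁T f] at hfm
      have hfv := (hT f).mp hfm.2
      intro t htT hft g hg hle1 hle2
      rw [hT] at htT
      have hw : (t - f) a = 0 ∧ (t - f) b = 0 ∧ (t - f) c = 0 := by
        have l1 : f a ≤ t a := hft a
        have l2 : f b ≤ t b := hft b
        have l3 : f c ≤ t c := hft c
        simp only [Pi.sub_apply]
        rcases hfv with ⟨_, _, _⟩ | ⟨_, _, _⟩ <;> rcases htT with ⟨_, _, _⟩ | ⟨_, _, _⟩ <;> omega
      obtain ⟨i, hiE, hperp, hpi⟩ := hle2
      have hgi : g + i ∈ piE T (t - f) := by rw [← hpi]; exact hself _ hperp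
      have h3 := key0 (g + i) (t - f) hgi hw.1 hw.2.1 hw.2.2
      simp only [Pi.add_apply] at h3
      exact hpi0 g (by omega) (by omega) (by omega)
end
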